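/- Let k be a field, S a finitely generated graded polynomial (symmetric) k-algebra, and X, Y finitely generated graded S-modules. Regard X ⊗_k Y as an S-module via the diagonal map Δ : S → S ⊗_k S induced by w ↦ w⊗1 + 1⊗w on generators. If G is a finite generating set for X ⊗_k Y as an (S ⊗_k S)-module and T is the S-submodule of X ⊗_k Y generated by G, then ann_S(X ⊗_k Y) = ann_S(T). -/
import Mathlib


open TensorProduct MvPolynomial

/-- `S = Sym_k W = k[χ₁,…,χ_c]`, the symmetric algebra on a `c`-dimensional space. -/
abbrev PolyS (k : Type*) [CommRing k] (c : ℕ) : Type _ := MvPolynomial (Fin c) k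

/-- The diagonal map `Δ : S → S ⊗ₖ S` determined by `w ↦ w ⊗ 1 + 1 ⊗ w` on generators. -/
noncomputable def diagMap (k : Type*) [CommRing k] (c : ℕ) :
    PolyS k c →ₐ[k] (PolyS k c ⊗[k] PolyS k c) :=
  MvPolynomial.aeval fun i => X i ⊗ₜ[k] 1 + 1 ⊗ₜ[k] X i

/-- The standard (external) module structure of `S ⊗ₖ S` on `X ⊗ₖ Y`, for `S`-modules `X, Y`:
`(s ⊗ s') • (x ⊗ y) = (s • x) ⊗ (s' • y)`. -/
noncomputable instance extScalars {k : Type*} [CommRing k] {S : Type*} [CommRing S] [Algebra k S]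
    {X Y : Type*} [AddCommGroup X] [Module k X] [Module S X] [IsScalarTower k S X]
    [AddCommGroup Y] [Module k Y] [Module S Y] [IsScalarTower k S Y] :
    Module (S ⊗[k] S) (X ⊗[k] Y) :=
  Module.compHom _
    ((Module.endTensorEndAlgHom (R := k) (S := k) (A := k) (M := X) (N := Y)).comp
      (Algebra.TensorProduct.map
        (Algebra.lsmul k k X (A := S))
        (Algebra.lsmul k k Y (A := S)))).toRingHom

/-- if `G` is a finite generating set of `X ⊗ₖ Y` over `S ⊗ₖ S` and `T` is the
`S`-submodule of `X ⊗ₖ Y` (with `S` acting through the diagonal `Δ`) generated by `G`, then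
`ann_S (X ⊗ₖ Y) = ann_S T`. -/
theorem stmt0 (k : Type*) [Field k] (c : ℕ)
    (X Y : Type*) [AddCommGroup X] [AddCommGroup Y]
    [Module k X] [Module (PolyS k c) X] [IsScalarTower k (PolyS k c) X]
    [Module k Y] [Module (PolyS k c) Y] [IsScalarTower k (PolyS k c) Y]
    [Module.Finite (PolyS k c) X] [Module.Finite (PolyS k c) Y]
    (G : Set (X ⊗[k] Y)) (hGfin : G.Finite)
    (hGgen : Submodule.span (PolyS k c ⊗[k] PolyS k c) G = ⊤)
    -- `T`, the `S`-submodule generated by `G`, where `S` acts through `Δ`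
    (T : AddSubmonoid (X ⊗[k] Y))
    (hT : T = AddSubmonoid.closure {x | ∃ (s : PolyS k c) (g : X ⊗[k] Y),
      g ∈ G ∧ x = diagMap k c s • g}) :
    -- `ann_S (X ⊗ₖ Y) = ann_S T` (elementwise, as ideals of `S`)
    ∀ s : PolyS k c,
      (∀ m : X ⊗[k] Y, diagMap k c s • m = 0) ↔ (∀ t ∈ T, diagMap k c s • t = 0) := by
  intro s
  constructor
  · intro h t _
    exact h t
  · intro h m
    have hG : ∀ g ∈ G, diagMap k c s • g = 0 := by
      intro g hg
      apply h
      rw [hT]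
      exact AddSubmonoid.subset_closure ⟨1, g, hg, by simp⟩
    have hm : m ∈ Submodule.span (PolyS k c ⊗[k] PolyS k c) G := hGgen ▸ Submodule.mem_top
    induction hm using Submodule.span_induction with
    | mem g hg => exact hG g hg
    | zero => simp
    | add x y _ _ hx hy => rw [smul_add, hx, hy, add_zero]
    | smul a x _ hx =>
      rw [smul_smul, mul_comm, ← smul_smul, hx, smul_zero]
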